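/- The operators P_a = S_{1a} ∑_b conj(S_{ba}) F_b are mutually orthogonal projections: P_a P_b = δ_{ab} P_a, and they resolve the string operators via F_b = ∑_a (S_{ba}/S_{1a}) P_a. -/
import Mathlib


open Matrix

/-- The operators `P_a = S_{1a} ∑_b conj(S_{ba}) F_b` are mutually
orthogonal projections, `P_a P_b = δ_{ab} P_a`, and they resolve the string operators:
`F_b = ∑_a (S_{ba}/S_{1a}) P_a`. -/
theorem idempotents_of_string_operators {A : Type*} [Fintype A] [DecidableEq A]
    (one : A) (S : Matrix A A ℂ)
    (hunit : S ∈ Matrix.unitaryGroup A ℂ)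
    (hsymm : Sᵀ = S)
    (hne : ∀ a, S one a ≠ 0)
    (N : A → A → A → ℂ)
    (hN : ∀ b c d, N b c d = ∑ a, S b a * S c a * star (S d a) / S one a)
    (F : A → Matrix A A ℂ)
    (hF : ∀ b, F b = Matrix.of fun d c => N b c d)
    (P : A → Matrix A A ℂ)
    (hP : ∀ a, P a = S one a • ∑ b, star (S b a) • F b) :
    (∀ a b, P a * P b = if a = b then P a else 0) ∧
    (∀ b, F b = ∑ a, (S b a / S one a) • P a) := by
  have hc : ∀ a x : A, (∑ b, star (S b a) * S b x) = if a = x then (1:ℂ) else 0 := by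
    intro a x
    have h1 : star S * S = 1 := hunit.1
    have h2 := congrFun (congrFun h1 a) x
    simpa [Matrix.mul_apply, Matrix.star_apply, Matrix.one_apply] using h2
  have hPe : ∀ a d c, P a d c = S c a * star (S d a) := by
    intro a d c
    rw [hP]
    simp only [Matrix.smul_apply, Matrix.sum_apply, hF, Matrix.of_apply, hN, smul_eq_mul]
    rw [Finset.mul_sum]
    have h3 : ∀ b : A,
        S one a * (star (S b a) * ∑ x, S b x * S c x * star (S d x) / S one x)
        = ∑ x, S one a * (S c x * star (S d x) / S one x) * (star (S b a) * S b x) := by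
      intro b
      rw [Finset.mul_sum, Finset.mul_sum]
      exact Finset.sum_congr rfl fun x _ => by ring
    simp only [h3]
    rw [Finset.sum_comm]
    have h4 : ∀ x : A,
        (∑ b, S one a * (S c x * star (S d x) / S one x) * (star (S b a) * S b x))
        = S one a * (S c x * star (S d x) / S one x) * (if a = x then 1 else 0) := by
      intro x
      rw [← Finset.mul_sum, hc]
    simp only [h4, mul_ite, mul_one, mul_zero]
    rw [Finset.sum_ite_eq Finset.univ a
      (fun x => S one a * (S c x * star (S d x) / S one x))]
    simp only [Finset.mem_univ, if_true]
    rw [← mul_div_assoc]; exact mul_div_cancel_left₀ _ (hne a)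
  have hd : ∀ a b : A, (∑ e, S e a * star (S e b)) = if a = b then (1:ℂ) else 0 := by
    intro a b
    have := hc b a
    rw [show (∑ e, S e a * star (S e b)) = ∑ e, star (S e b) * S e a from
      Finset.sum_congr rfl fun e _ => mul_comm _ _, this]
    by_cases h : a = b <;> simp [h, eq_comm]
  constructor
  · intro a b
    ext d c
    rw [Matrix.mul_apply]
    simp only [hPe]
    have : (∑ e, S e a * star (S d a) * (S c b * star (S e b)))
        = star (S d a) * S c b * ∑ e, S e a * star (S e b) := by
      rw [Finset.mul_sum]
      exact Finset.sum_congr rfl fun e _ => by ring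
    rw [this, hd]
    by_cases h : a = b
    · subst h
      simp [hPe]; ring
    · simp [h]
  · intro b
    ext d c
    rw [hF]
    simp only [Matrix.of_apply, hN, Matrix.sum_apply, Matrix.smul_apply, smul_eq_mul, hPe]
    exact Finset.sum_congr rfl fun a _ => by ring
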